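/- (Variation of parameters, case k = 0.) Let f_1 : U → ℝ be a given continuous function, let b_0 ∈ ℝ, let B_0 : U → ℝ be differentiable, and define f_0(u) := (b_0 + B_0(u))·((n−2)/(n−1))·|F(u)|^{−n/(n−2)}·(F'(u))^{−1}. Then f_0 satisfies −a²·g + f_0'·g + a·f_1·g − f_0·g' + 2·f_0 = 0 on U if and only if B_0'(u) = (a² − a·f_1(u))·((n−1)/(n−2))·|F(u)|^{n/(n−2)}·F'(u) for all u ∈ U. -/

import Mathlib

/-!
With `c = (n-2)/(n-1)` and `p = -n/(n-2)`, the function `h = c |F|^p / F'` solves the homogeneous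
equation `h' g - h g' + 2 h = 0`: the terms in `F''` cancel and what is left is
`c (p - 1) |F|^p / F' = -2 h`. Writing `f₀ = (b₀ + B₀) h`, the product rule reduces the equation
for `f₀` to `g (B₀' h - (a² - a f₁)) = 0`, and `g`, `h` do not vanish.
-/

/-- The function `g = ((n−2)F)/((n−1)F')`. -/
noncomputable def gFun (n : ℕ) (F : ℝ → ℝ) (u : ℝ) : ℝ :=
  (((n : ℝ) - 2) * F u) / (((n : ℝ) - 1) * deriv F u)

theorem HasDerivAt.abs_rpow_const {F : ℝ → ℝ} {F' u : ℝ} (hF : HasDerivAt F F' u)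
    (hu : F u ≠ 0) (p : ℝ) :
    HasDerivAt (fun x => |F x| ^ p) (p * |F u| ^ p * F' / F u) u := by
  refine (((hasDerivAt_abs hu).comp u hF).rpow_const (p := p)
    (Or.inl (abs_ne_zero.mpr hu))).congr_deriv ?_
  rw [Function.comp_apply, Real.rpow_sub_one (abs_ne_zero.mpr hu)]
  rcases hu.lt_or_gt with hneg | hpos
  · simp only [hneg, sign_neg, SignType.coe_neg_one, abs_of_neg hneg]
    field_simp
  · simp only [hpos, sign_pos, SignType.coe_one, abs_of_pos hpos]
    field_simp

theorem deriv_mul_sub_mul_deriv_add {B y : ℝ → ℝ} {u : ℝ} (hB : DifferentiableAt ℝ B u)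
    (hy : DifferentiableAt ℝ y u) (κ g g' : ℝ) :
    deriv (fun x => B x * y x) u * g - B u * y u * g' + κ * (B u * y u)
      = deriv B u * y u * g + B u * (deriv y u * g - y u * g' + κ * y u) := by
  rw [deriv_fun_mul hB hy]
  ring

noncomputable def homogeneousSolution (n : ℕ) (F : ℝ → ℝ) (x : ℝ) : ℝ :=
  ((n : ℝ) - 2) / ((n : ℝ) - 1) * |F x| ^ (-(n : ℝ) / ((n : ℝ) - 2)) * (deriv F x)⁻¹

section

variable {n : ℕ} {F : ℝ → ℝ} {u : ℝ}

theorem hasDerivAt_gFun (hn1 : (n : ℝ) ≠ 1) (hF : DifferentiableAt ℝ F u)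
    (hF' : DifferentiableAt ℝ (deriv F) u) (hF'u : deriv F u ≠ 0) :
    HasDerivAt (gFun n F) (((n : ℝ) - 2) / ((n : ℝ) - 1)
      * (1 - F u * deriv (deriv F) u / deriv F u ^ 2)) u := by
  refine ((hF.hasDerivAt.const_mul ((n : ℝ) - 2)).div (hF'.hasDerivAt.const_mul ((n : ℝ) - 1))
    (mul_ne_zero (sub_ne_zero.mpr hn1) hF'u)).congr_deriv ?_
  field_simp

theorem hasDerivAt_homogeneousSolution (hF : DifferentiableAt ℝ F u)
    (hF' : DifferentiableAt ℝ (deriv F) u) (hFu : F u ≠ 0) (hF'u : deriv F u ≠ 0) :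
    HasDerivAt (homogeneousSolution n F)
      (homogeneousSolution n F u * (-(n : ℝ) / ((n : ℝ) - 2) * deriv F u / F u
        - deriv (deriv F) u / deriv F u)) u := by
  have h := (((hF.hasDerivAt.abs_rpow_const hFu (-(n : ℝ) / ((n : ℝ) - 2))).const_mul
    (((n : ℝ) - 2) / ((n : ℝ) - 1))).mul (hF'.hasDerivAt.inv hF'u))
  refine h.congr_deriv ?_
  rw [homogeneousSolution, Pi.inv_apply]
  ring

theorem homogeneousSolution_equation (hn1 : (n : ℝ) ≠ 1) (hn2 : (n : ℝ) ≠ 2)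
    (hF : DifferentiableAt ℝ F u) (hF' : DifferentiableAt ℝ (deriv F) u) (hFu : F u ≠ 0)
    (hF'u : deriv F u ≠ 0) :
    deriv (homogeneousSolution n F) u * gFun n F u
      - homogeneousSolution n F u * deriv (gFun n F) u + 2 * homogeneousSolution n F u = 0 := by
  rw [(hasDerivAt_homogeneousSolution hF hF' hFu hF'u).deriv,
    (hasDerivAt_gFun hn1 hF hF' hF'u).deriv]
  have hn1' : (n : ℝ) - 1 ≠ 0 := sub_ne_zero.mpr hn1
  have hn2' : (n : ℝ) - 2 ≠ 0 := sub_ne_zero.mpr hn2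
  simp only [gFun, homogeneousSolution]
  field_simp
  ring

theorem gFun_ne_zero (hn1 : (n : ℝ) ≠ 1) (hn2 : (n : ℝ) ≠ 2) (hFu : F u ≠ 0)
    (hF'u : deriv F u ≠ 0) : gFun n F u ≠ 0 :=
  div_ne_zero (mul_ne_zero (sub_ne_zero.mpr hn2) hFu) (mul_ne_zero (sub_ne_zero.mpr hn1) hF'u)

theorem homogeneousSolution_ne_zero (hn1 : (n : ℝ) ≠ 1) (hn2 : (n : ℝ) ≠ 2) (hFu : F u ≠ 0)
    (hF'u : deriv F u ≠ 0) : homogeneousSolution n F u ≠ 0 :=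
  mul_ne_zero (mul_ne_zero (div_ne_zero (sub_ne_zero.mpr hn2) (sub_ne_zero.mpr hn1))
    (Real.rpow_pos_of_pos (abs_pos.mpr hFu) _).ne') (inv_ne_zero hF'u)

theorem homogeneousSolution_inv :
    (homogeneousSolution n F u)⁻¹
      = ((n : ℝ) - 1) / ((n : ℝ) - 2) * |F u| ^ ((n : ℝ) / ((n : ℝ) - 2)) * deriv F u := by
  rw [homogeneousSolution, neg_div, Real.rpow_neg (abs_nonneg _)]
  simp only [mul_inv, inv_div, inv_inv]

end

theorem stmt18_general (n : ℕ) (hn : 4 ≤ n) (a : ℝ)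
    (U : Set ℝ)
    (F : ℝ → ℝ)
    (hF₁ : ∀ u ∈ U, DifferentiableAt ℝ F u)
    (hF₂ : ∀ u ∈ U, DifferentiableAt ℝ (deriv F) u)
    (hFne : ∀ u ∈ U, F u ≠ 0)
    (hF'pos : ∀ u ∈ U, 0 < deriv F u)
    (f1 : ℝ → ℝ)
    (b0 : ℝ) (B0 : ℝ → ℝ) (hB0 : ∀ u ∈ U, DifferentiableAt ℝ B0 u) :
    (∀ u ∈ U,
      -a ^ 2 * gFun n F u
        + deriv (fun x => (b0 + B0 x) * (((n : ℝ) - 2) / ((n : ℝ) - 1))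
            * |F x| ^ (-(n : ℝ) / ((n : ℝ) - 2)) * (deriv F x)⁻¹) u * gFun n F u
        + a * f1 u * gFun n F u
        - ((b0 + B0 u) * (((n : ℝ) - 2) / ((n : ℝ) - 1))
            * |F u| ^ (-(n : ℝ) / ((n : ℝ) - 2)) * (deriv F u)⁻¹) * deriv (gFun n F) u
        + 2 * ((b0 + B0 u) * (((n : ℝ) - 2) / ((n : ℝ) - 1))
            * |F u| ^ (-(n : ℝ) / ((n : ℝ) - 2)) * (deriv F u)⁻¹) = 0) ↔
    (∀ u ∈ U,
      deriv B0 u = (a ^ 2 - a * f1 u) * (((n : ℝ) - 1) / ((n : ℝ) - 2))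
        * |F u| ^ ((n : ℝ) / ((n : ℝ) - 2)) * deriv F u) := by
  have hn4 : (4 : ℝ) ≤ n := by exact_mod_cast hn
  have hn1 : (n : ℝ) ≠ 1 := by linarith
  have hn2 : (n : ℝ) ≠ 2 := by linarith
  have hf0 : ∀ x, (b0 + B0 x) * (((n : ℝ) - 2) / ((n : ℝ) - 1))
      * |F x| ^ (-(n : ℝ) / ((n : ℝ) - 2)) * (deriv F x)⁻¹
      = (b0 + B0 x) * homogeneousSolution n F x := fun x => by
    rw [homogeneousSolution]; ring
  simp only [hf0]
  refine forall₂_congr fun u hu => ?_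
  have hFu := hFne u hu
  have hF'u := (hF'pos u hu).ne'
  have hvar := deriv_mul_sub_mul_deriv_add ((hB0 u hu).const_add b0)
    (hasDerivAt_homogeneousSolution (n := n) (hF₁ u hu) (hF₂ u hu) hFu hF'u).differentiableAt
    2 (gFun n F u) (deriv (gFun n F) u)
  rw [homogeneousSolution_equation hn1 hn2 (hF₁ u hu) (hF₂ u hu) hFu hF'u, mul_zero, add_zero,
    deriv_const_add] at hvar
  rw [show (a ^ 2 - a * f1 u) * (((n : ℝ) - 1) / ((n : ℝ) - 2))
      * |F u| ^ ((n : ℝ) / ((n : ℝ) - 2)) * deriv F u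
      = (a ^ 2 - a * f1 u) * (homogeneousSolution n F u)⁻¹ by rw [homogeneousSolution_inv]; ring,
    eq_mul_inv_iff_mul_eq₀ (homogeneousSolution_ne_zero hn1 hn2 hFu hF'u)]
  constructor
  · intro h
    apply mul_left_cancel₀ (gFun_ne_zero hn1 hn2 hFu hF'u)
    linear_combination h - hvar
  · intro h
    linear_combination hvar + gFun n F u * h

theorem stmt18 (n : ℕ) (hn : 4 ≤ n) (a : ℝ)
    (U : Set ℝ) (hU : IsOpen U) (hUc : U.OrdConnected)
    (F : ℝ → ℝ)
    (hF₁ : ∀ u ∈ U, DifferentiableAt ℝ F u)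
    (hF₂ : ∀ u ∈ U, DifferentiableAt ℝ (deriv F) u)
    (hFne : ∀ u ∈ U, F u ≠ 0)
    (hF'pos : ∀ u ∈ U, 0 < deriv F u)
    (f1 : ℝ → ℝ) (hf1 : ContinuousOn f1 U)
    (b0 : ℝ) (B0 : ℝ → ℝ) (hB0 : ∀ u ∈ U, DifferentiableAt ℝ B0 u) :
    (∀ u ∈ U,
      -a ^ 2 * gFun n F u
        + deriv (fun x => (b0 + B0 x) * (((n : ℝ) - 2) / ((n : ℝ) - 1))
            * |F x| ^ (-(n : ℝ) / ((n : ℝ) - 2)) * (deriv F x)⁻¹) u * gFun n F u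
        + a * f1 u * gFun n F u
        - ((b0 + B0 u) * (((n : ℝ) - 2) / ((n : ℝ) - 1))
            * |F u| ^ (-(n : ℝ) / ((n : ℝ) - 2)) * (deriv F u)⁻¹) * deriv (gFun n F) u
        + 2 * ((b0 + B0 u) * (((n : ℝ) - 2) / ((n : ℝ) - 1))
            * |F u| ^ (-(n : ℝ) / ((n : ℝ) - 2)) * (deriv F u)⁻¹) = 0) ↔
    (∀ u ∈ U,
      deriv B0 u = (a ^ 2 - a * f1 u) * (((n : ℝ) - 1) / ((n : ℝ) - 2))
        * |F u| ^ ((n : ℝ) / ((n : ℝ) - 2)) * deriv F u) :=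
  stmt18_general n hn a U F hF₁ hF₂ hFne hF'pos f1 b0 B0 hB0
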